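/- The sum of the absolute values of the eigenvalues of the block matrix M = [[I_p, J_{p×q}], [J_{q×p}, 0_q]] equals (p − 1) + √(1 + 4pq). -/

import Mathlib

open Polynomial Matrix

/-- The block matrix `M = [[I_p, J_{p×q}], [J_{q×p}, 0_q]]`. -/
noncomputable def splitM (p q : ℕ) : Matrix (Fin p ⊕ Fin q) (Fin p ⊕ Fin q) ℝ :=
  Matrix.fromBlocks 1 (Matrix.of fun _ _ => 1) (Matrix.of fun _ _ => 1) 0

/-- The energy of a real matrix: the sum of the absolute values of its eigenvalues
(the roots of its characteristic polynomial) counted with multiplicity. -/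
noncomputable def energy {n : Type*} [Fintype n] [DecidableEq n] (M : Matrix n n ℝ) : ℝ :=
  (M.charpoly.roots.map fun x => |x|).sum

lemma eval_charpoly' {n : Type*} [Fintype n] [DecidableEq n] (M : Matrix n n ℝ) (x : ℝ) :
    (M.charpoly).eval x = (x • (1 : Matrix n n ℝ) - M).det := by
  rw [Matrix.charpoly, ← Polynomial.coe_evalRingHom, RingHom.map_det]
  congr 1
  ext i j
  by_cases h : i = j
  · subst h; simp [charmatrix_apply_eq]
  · simp [charmatrix_apply_ne _ _ _ h, Matrix.one_apply_ne h]

lemma det_eval (p q : ℕ) (x : ℝ) (hx0 : x ≠ 0) (hx1 : x - 1 ≠ 0) :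
    (x • (1 : Matrix (Fin p ⊕ Fin q) (Fin p ⊕ Fin q) ℝ) - splitM p q).det =
      x ^ q * ((x - 1) ^ p * (1 + (p : ℝ) * -(q / (x * (x - 1))))) := by
  have hb : x • (1 : Matrix (Fin p ⊕ Fin q) (Fin p ⊕ Fin q) ℝ) - splitM p q =
      Matrix.fromBlocks ((x - 1) • 1) (Matrix.of fun _ _ => (-1 : ℝ))
        (Matrix.of fun _ _ => (-1 : ℝ)) (x • 1) := by
    ext (i | i) (j | j) <;> simp [splitM, Matrix.one_apply, sub_smul]
  rw [hb]
  letI : Invertible (x • (1 : Matrix (Fin q) (Fin q) ℝ)) :=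
    ⟨x⁻¹ • 1, by simp [Matrix.smul_mul, Matrix.mul_smul, smul_smul, inv_mul_cancel₀ hx0,
        mul_inv_cancel₀ hx0],
      by simp [Matrix.smul_mul, Matrix.mul_smul, smul_smul, inv_mul_cancel₀ hx0,
        mul_inv_cancel₀ hx0]⟩
  rw [Matrix.det_fromBlocks₂₂]
  have hinv : ⅟ (x • (1 : Matrix (Fin q) (Fin q) ℝ)) = x⁻¹ • 1 := rfl
  rw [hinv]
  have hdq : (x • (1 : Matrix (Fin q) (Fin q) ℝ)).det = x ^ q := by
    simp [Matrix.det_smul]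
  rw [hdq]
  congr 1
  have hN : (x - 1) • (1 : Matrix (Fin p) (Fin p) ℝ) -
      (Matrix.of fun _ _ => (-1 : ℝ) : Matrix (Fin p) (Fin q) ℝ) *
        (x⁻¹ • (1 : Matrix (Fin q) (Fin q) ℝ)) *
        (Matrix.of fun _ _ => (-1 : ℝ) : Matrix (Fin q) (Fin p) ℝ) =
      (x - 1) • (1 + Matrix.replicateCol (Fin 1) (fun _ => -((q : ℝ) / (x * (x - 1)))) *
        Matrix.replicateRow (Fin 1) (fun _ => (1 : ℝ))) := by
    ext i j
    by_cases h : i = j <;>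
      simp [h, Matrix.mul_apply, Matrix.one_apply, Matrix.smul_apply, Matrix.replicateCol_apply,
        Matrix.replicateRow_apply, Finset.sum_const] <;> field_simp <;> ring
  rw [hN, Matrix.det_smul]
  erw [Matrix.det_one_add_replicateCol_mul_replicateRow (ι := Fin 1)]
  simp [dotProduct, Finset.sum_const]

lemma charpoly_splitM (p q : ℕ) (hp : 1 ≤ p) (hq : 1 ≤ q) (r₁ r₂ : ℝ)
    (hsum : r₁ + r₂ = 1) (hprod : r₁ * r₂ = -((p : ℝ) * q)) :
    (splitM p q).charpoly =
      (X - C 1) ^ (p - 1) * (X ^ (q - 1) * ((X - C r₁) * (X - C r₂))) := by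
  apply Polynomial.eq_of_infinite_eval_eq
  apply Set.Infinite.mono (s := ({0, 1} : Set ℝ)ᶜ)
  · intro x hx
    simp only [Set.mem_compl_iff, Set.mem_insert_iff, Set.mem_singleton_iff, not_or] at hx
    obtain ⟨hx0, hx1'⟩ := hx
    have hx1 : x - 1 ≠ 0 := sub_ne_zero.mpr hx1'
    simp only [Set.mem_setOf_eq]
    rw [eval_charpoly', det_eval p q x hx0 hx1]
    have hr : (x - r₁) * (x - r₂) = x ^ 2 - x - (p : ℝ) * q := by
      have : (x - r₁) * (x - r₂) = x ^ 2 - (r₁ + r₂) * x + r₁ * r₂ := by ring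
      rw [this, hsum, hprod]; ring
    simp only [eval_mul, eval_pow, eval_sub, eval_X, eval_C, eval_one]
    rw [hr]
    have hxq : x ^ q = x ^ (q - 1) * x := by
      rw [← pow_succ]; congr 1; omega
    have hxp : (x - 1) ^ p = (x - 1) ^ (p - 1) * (x - 1) := by
      rw [← pow_succ]; congr 1; omega
    rw [hxq, hxp]
    field_simp
    ring
  · exact Set.Finite.infinite_compl (by simp)

theorem energy_splitM (p q : ℕ) (hp : 1 ≤ p) (hq : 1 ≤ q) :
    energy (splitM p q) = ((p : ℝ) - 1) + Real.sqrt (1 + 4 * p * q) := by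
  set s := Real.sqrt (1 + 4 * p * q) with hs
  have hs0 : (0 : ℝ) ≤ 1 + 4 * p * q := by positivity
  have hs2 : s ^ 2 = 1 + 4 * p * q := Real.sq_sqrt hs0
  have hsnn : 0 ≤ s := Real.sqrt_nonneg _
  have hpq : (1 : ℝ) ≤ (p : ℝ) * q := by
    have : (1 : ℝ) ≤ (p : ℝ) := by exact_mod_cast hp
    have hq' : (1 : ℝ) ≤ (q : ℝ) := by exact_mod_cast hq
    nlinarith
  have hs1 : 1 ≤ s := by nlinarith
  have hsum : (1 + s) / 2 + (1 - s) / 2 = 1 := by ring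
  have hprod : (1 + s) / 2 * ((1 - s) / 2) = -((p : ℝ) * q) := by
    have : (1 + s) / 2 * ((1 - s) / 2) = (1 - s ^ 2) / 4 := by ring
    rw [this, hs2]; ring
  rw [energy, charpoly_splitM p q hp hq _ _ hsum hprod]
  have m1 : ((X - C (1 : ℝ)) ^ (p - 1)).Monic := (monic_X_sub_C 1).pow _
  have m2 : ((X : ℝ[X]) ^ (q - 1)).Monic := monic_X_pow _
  have m3 : ((X - C ((1 + s) / 2)) * (X - C ((1 - s) / 2))).Monic :=
    (monic_X_sub_C _).mul (monic_X_sub_C _)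
  rw [Polynomial.roots_mul (by exact (m1.mul (m2.mul m3)).ne_zero),
    Polynomial.roots_mul (by exact (m2.mul m3).ne_zero),
    Polynomial.roots_mul (by exact m3.ne_zero),
    Polynomial.roots_pow, Polynomial.roots_pow, Polynomial.roots_X_sub_C,
    Polynomial.roots_X, Polynomial.roots_X_sub_C, Polynomial.roots_X_sub_C]
  simp only [Multiset.map_add, Multiset.sum_add, Multiset.map_nsmul, Multiset.sum_nsmul,
    Multiset.map_singleton, Multiset.sum_singleton, abs_one, abs_zero, smul_eq_mul,
    nsmul_eq_mul, mul_one, mul_zero]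
  have h1 : |(1 + s) / 2| = (1 + s) / 2 := abs_of_nonneg (by linarith)
  have h2 : |(1 - s) / 2| = -((1 - s) / 2) := abs_of_nonpos (by linarith)
  rw [h1, h2]
  have hcast : ((p - 1 : ℕ) : ℝ) = (p : ℝ) - 1 := by
    rw [Nat.cast_sub hp]; simp
  rw [hcast]
  ring
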